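/- (Lorentz–Luxemburg theorem) Let X be a Banach space contained in L^0(ℝ^n) satisfying the lattice property (L) and the saturation property (Sa). Then X satisfies the Fatou property (F) if and only if the second Köthe dual X'' coincides with X with equality of norms: X'' = X as sets and ‖f‖_{X''} = ‖f‖_X for all f ∈ X. -/

import Mathlib

open MeasureTheory Filter ENNReal

noncomputable section

/-- ℝⁿ as a Euclidean space. -/
abbrev Rn (n : ℕ) := EuclideanSpace ℝ (Fin n)

/-- A Banach space `X` contained in `L⁰(ℝⁿ)`: a collection of (a.e. equivalence
classes of) measurable functions on `ℝⁿ`, with a complete norm. -/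
structure BanachInL0 (n : ℕ) where
  carrier : Set (Rn n → ℝ)
  norm : (Rn n → ℝ) → ℝ
  mem_congr : ∀ {f g : Rn n → ℝ}, f =ᵐ[volume] g → f ∈ carrier → g ∈ carrier
  norm_congr : ∀ {f g : Rn n → ℝ}, f =ᵐ[volume] g → norm f = norm g
  aemeasurable : ∀ {f : Rn n → ℝ}, f ∈ carrier → AEMeasurable f volume
  zero_mem : (0 : Rn n → ℝ) ∈ carrier
  add_mem : ∀ {f g : Rn n → ℝ}, f ∈ carrier → g ∈ carrier → f + g ∈ carrier
  smul_mem : ∀ (c : ℝ) {f : Rn n → ℝ}, f ∈ carrier → c • f ∈ carrier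
  norm_nonneg : ∀ f : Rn n → ℝ, 0 ≤ norm f
  norm_eq_zero : ∀ {f : Rn n → ℝ}, f ∈ carrier → norm f = 0 → f =ᵐ[volume] (0 : Rn n → ℝ)
  norm_zero : norm 0 = 0
  norm_add_le : ∀ {f g : Rn n → ℝ}, f ∈ carrier → g ∈ carrier → norm (f + g) ≤ norm f + norm g
  norm_smul : ∀ (c : ℝ) (f : Rn n → ℝ), norm (c • f) = |c| * norm f
  complete : ∀ F : ℕ → Rn n → ℝ, (∀ k, F k ∈ carrier) →
    (∀ ε : ℝ, 0 < ε → ∃ N : ℕ, ∀ k l, N ≤ k → N ≤ l → norm (F k - F l) < ε) →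
    ∃ g ∈ carrier, Tendsto (fun k => norm (F k - g)) atTop (nhds 0)

namespace BanachInL0

variable {n : ℕ}

/-- The lattice property (L). -/
def PropL (X : BanachInL0 n) : Prop :=
  ∀ f g : Rn n → ℝ, f ∈ X.carrier → AEMeasurable g volume →
    (∀ᵐ x ∂volume, |g x| ≤ |f x|) → g ∈ X.carrier ∧ X.norm g ≤ X.norm f

/-- The Fatou property (F). -/
def PropF (X : BanachInL0 n) : Prop :=
  ∀ (F : ℕ → Rn n → ℝ) (f : Rn n → ℝ), (∀ k, F k ∈ X.carrier) → AEMeasurable f volume →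
    (∀ᵐ x ∂volume, (∀ k, 0 ≤ F k x) ∧ Monotone (fun k => F k x) ∧
      Tendsto (fun k => F k x) atTop (nhds (f x))) →
    BddAbove (Set.range fun k => X.norm (F k)) →
    f ∈ X.carrier ∧ X.norm f = ⨆ k, X.norm (F k)

/-- The saturation property (Sa). -/
def PropSa (X : BanachInL0 n) : Prop :=
  ∀ E : Set (Rn n), MeasurableSet E → 0 < volume E →
    ∃ F : Set (Rn n), MeasurableSet F ∧ F ⊆ E ∧ 0 < volume F ∧
      F.indicator (fun _ => (1 : ℝ)) ∈ X.carrier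

/-- Property (BSi): the indicator of every ball belongs to `X`. -/
def PropBSi (X : BanachInL0 n) : Prop :=
  ∀ (c : Rn n) (r : ℝ), 0 < r →
    (Metric.ball c r).indicator (fun _ => (1 : ℝ)) ∈ X.carrier

/-- Property (BLI): functions in `X` are locally integrable, uniformly on each ball. -/
def PropBLI (X : BanachInL0 n) : Prop :=
  ∀ (c : Rn n) (r : ℝ), 0 < r → ∃ C : ℝ, ∀ f ∈ X.carrier,
    ∫⁻ y in Metric.ball c r, ENNReal.ofReal |f y| ≤ ENNReal.ofReal (C * X.norm f)

/-- Property (Si): the indicator of every set of finite measure belongs to `X`. -/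
def PropSi (X : BanachInL0 n) : Prop :=
  ∀ E : Set (Rn n), MeasurableSet E → volume E < ∞ →
    E.indicator (fun _ => (1 : ℝ)) ∈ X.carrier

/-- Property (LI): functions in `X` are integrable on sets of finite measure,
uniformly on each such set. -/
def PropLI (X : BanachInL0 n) : Prop :=
  ∀ E : Set (Rn n), MeasurableSet E → volume E < ∞ → ∃ C : ℝ, ∀ f ∈ X.carrier,
    ∫⁻ y in E, ENNReal.ofReal |f y| ≤ ENNReal.ofReal (C * X.norm f)

/-- A saturated Banach function space: (L), (F) and (Sa). -/
def IsSaturatedBFS (X : BanachInL0 n) : Prop :=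
  X.PropL ∧ X.PropF ∧ X.PropSa

/-- A ball Banach function space: (L), (F), (BSi) and (BLI). -/
def IsBallBFS (X : BanachInL0 n) : Prop :=
  X.PropL ∧ X.PropF ∧ X.PropBSi ∧ X.PropBLI

end BanachInL0

/-- The Köthe dual of a set `S ⊆ L⁰(ℝⁿ)` of measurable functions. -/
def kotheDual {n : ℕ} (S : Set (Rn n → ℝ)) : Set (Rn n → ℝ) :=
  {g | AEMeasurable g volume ∧ ∀ f ∈ S, Integrable (fun x => f x * g x) volume}

/-- The Köthe dual (semi)norm associated with a set `S` normed by `N : S → ℝ`. -/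
def kotheDualNorm {n : ℕ} (S : Set (Rn n → ℝ)) (N : (Rn n → ℝ) → ℝ)
    (g : Rn n → ℝ) : ℝ≥0∞ :=
  ⨆ (f : Rn n → ℝ) (_ : f ∈ S ∧ N f ≤ 1), ∫⁻ x, ENNReal.ofReal |f x * g x|

/-- The Köthe dual (semi)norm associated with a set `S` normed by `N : S → ℝ≥0∞`. -/
def kotheDualNormE {n : ℕ} (S : Set (Rn n → ℝ)) (N : (Rn n → ℝ) → ℝ≥0∞)
    (g : Rn n → ℝ) : ℝ≥0∞ :=
  ⨆ (f : Rn n → ℝ) (_ : f ∈ S ∧ N f ≤ 1), ∫⁻ x, ENNReal.ofReal |f x * g x|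

/-- The Hardy–Littlewood maximal operator on `ℝⁿ`. -/
def hlMaximal {n : ℕ} (f : Rn n → ℝ) (x : Rn n) : ℝ≥0∞ :=
  ⨆ (c : Rn n) (r : ℝ) (_ : x ∈ Metric.ball c r),
    (volume (Metric.ball c r))⁻¹ * ∫⁻ y in Metric.ball c r, ENNReal.ofReal |f y|


/-!
Hölder's inequality gives `‖f‖_{X''} ≤ ‖f‖_X`. Under (F), the converse inequality comes from
Hahn–Banach in `L²`: (F) makes the unit ball of `X` closed in `L²` and, applied to truncations,
shows that `f` has a bounded, finitely supported truncation `φ` of almost the same norm. A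
functional separating `φ` from the unit ball is integration against some `G ∈ L²`, and a multiple
of `G` is a unit vector of `X'` norming `φ`. For `f ∈ X''`, saturation provides sets exhausting
`ℝⁿ` with indicators in `X`; the truncations of `|f|` to them lie in `X` with norms at most
`‖f‖_{X''} < ∞`, so (F) puts `f` in `X`.

Conversely, if `0 ≤ Fₖ ↑ f` with `‖Fₖ‖_X ≤ C`, monotone convergence gives `∫ |g f| ≤ C ‖g‖_{X'}`,
which is finite for `g ∈ X'` because `X` is complete; hence `f ∈ X'' = X` and
`‖f‖_{X''} = supₖ ‖Fₖ‖_{X''}`.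
-/

open Topology

section MeasureTheory

variable {α : Type*} [MeasurableSpace α] {μ : Measure α}

theorem exists_monotone_ae_mem_iUnion [SFinite μ] {P : Set α → Prop}
    (measurable : ∀ s, P s → MeasurableSet s) (empty : P ∅)
    (union : ∀ s t, P s → P t → P (s ∪ t))
    (saturated : ∀ E, MeasurableSet E → 0 < μ E → ∃ F ⊆ E, P F ∧ 0 < μ F) :
    ∃ D : ℕ → Set α, Monotone D ∧ (∀ k, P (D k)) ∧ ∀ᵐ x ∂μ, x ∈ ⋃ k, D k := by
  set ν := μ.toFinite
  obtain ⟨u, -, hu_lim, hu_mem⟩ := exists_seq_tendsto_sSup (S := ν '' {s | P s})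
    ⟨ν ∅, ∅, empty, rfl⟩ (OrderTop.bddAbove _)
  choose F hF hνF using hu_mem
  set D := Set.accumulate F
  have hD : ∀ k, P (D k) := by
    intro k
    induction k with
    | zero => simpa [D, Set.accumulate_zero_nat] using hF 0
    | succ k ih => simpa [D, Set.accumulate_succ] using union _ _ ih (hF (k + 1))
  refine ⟨D, Set.monotone_accumulate, hD, ?_⟩
  set U := ⋃ k, D k
  have hU : MeasurableSet U := MeasurableSet.iUnion fun k => measurable _ (hD k)
  have hνU : sSup (ν '' {s | P s}) ≤ ν U := le_of_tendsto' hu_lim fun k =>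
    (hνF k).symm.le.trans (measure_mono (Set.subset_accumulate.trans (Set.subset_iUnion D k)))
  -- a positive-measure piece `G` of `Uᶜ` with `P G` would push `ν U` above the supremum
  by_contra hne
  rw [ae_iff, ← Set.compl_def] at hne
  obtain ⟨G, hGU, hG, hGpos⟩ := saturated _ hU.compl (pos_iff_ne_zero.2 hne)
  have hνG : ν G ≠ 0 := fun h => hGpos.ne' (toFinite_apply_eq_zero_iff.1 h)
  have hle : ν (U ∪ G) ≤ ν U := by
    rw [Set.iUnion_union, (Set.monotone_accumulate.union monotone_const).measure_iUnion]
    exact iSup_le fun k =>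
      (le_sSup (Set.mem_image_of_mem ν (union _ _ (hD k) hG))).trans hνU
  rw [measure_union (disjoint_compl_right.mono_right hGU) (measurable _ hG)] at hle
  exact hνG (nonpos_iff_eq_zero.1 (ENNReal.le_of_add_le_add_left (measure_ne_top ν U)
    (by simpa using hle)))

theorem lintegral_ofReal_eq_iSup_of_monotone {F : ℕ → α → ℝ} {f : α → ℝ}
    (hF : ∀ k, AEMeasurable (F k) μ) (hmono : ∀ᵐ x ∂μ, Monotone fun k => F k x)
    (hlim : ∀ᵐ x ∂μ, Tendsto (fun k => F k x) atTop (𝓝 (f x))) :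
    ∫⁻ x, ENNReal.ofReal (f x) ∂μ = ⨆ k, ∫⁻ x, ENNReal.ofReal (F k x) ∂μ := by
  refine (iSup_eq_of_tendsto (fun i j hij => lintegral_mono_ae ?_) ?_).symm
  · filter_upwards [hmono] with x hx using ENNReal.ofReal_le_ofReal (hx hij)
  · refine lintegral_tendsto_of_tendsto_of_monotone (fun k => (hF k).ennreal_ofReal) ?_ ?_
    · filter_upwards [hmono] with x hx using fun i j hij => ENNReal.ofReal_le_ofReal (hx hij)
    · filter_upwards [hlim] with x hx using (ENNReal.continuous_ofReal.tendsto _).comp hx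

theorem lintegral_ofReal_abs_smul_mul (c : ℝ) (f g : α → ℝ) :
    ∫⁻ x, ENNReal.ofReal |(c • f) x * g x| ∂μ
      = ENNReal.ofReal |c| * ∫⁻ x, ENNReal.ofReal |f x * g x| ∂μ := by
  rw [← lintegral_const_mul' _ _ ENNReal.ofReal_ne_top]
  congr 1 with x
  rw [← ENNReal.ofReal_mul (abs_nonneg c), ← abs_mul, Pi.smul_apply, smul_eq_mul, mul_assoc]

theorem lintegral_ofReal_abs_mul_smul (c : ℝ) (f g : α → ℝ) :
    ∫⁻ x, ENNReal.ofReal |f x * (c • g) x| ∂μ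
      = ENNReal.ofReal |c| * ∫⁻ x, ENNReal.ofReal |f x * g x| ∂μ := by
  simp_rw [mul_comm (f _)]
  exact lintegral_ofReal_abs_smul_mul c g f

end MeasureTheory

section Truncation

variable {α : Type*}

def truncation (D : ℕ → Set α) (f : α → ℝ) (k : ℕ) : α → ℝ :=
  (D k).indicator fun x => min |f x| k

variable {D : ℕ → Set α} {f : α → ℝ}

theorem truncation_nonneg (k : ℕ) (x : α) : 0 ≤ truncation D f k x :=
  Set.indicator_nonneg (fun _ _ => le_min (abs_nonneg _) k.cast_nonneg) x

theorem truncation_le_abs (k : ℕ) (x : α) : truncation D f k x ≤ |f x| := by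
  unfold truncation
  by_cases hx : x ∈ D k
  · simp [hx]
  · simp [hx]

theorem truncation_le_indicator (k : ℕ) (x : α) :
    truncation D f k x ≤ (D k).indicator (fun _ => (k : ℝ)) x :=
  Set.indicator_le_indicator (min_le_right _ _)

theorem abs_truncation (k : ℕ) (x : α) : |truncation D f k x| = truncation D f k x :=
  abs_of_nonneg (truncation_nonneg k x)

theorem monotone_truncation (hD : Monotone D) (x : α) : Monotone fun k => truncation D f k x := by
  intro i j hij
  simp only [truncation]
  by_cases hx : x ∈ D i
  · rw [Set.indicator_of_mem hx, Set.indicator_of_mem (hD hij hx)]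
    exact min_le_min_left _ (Nat.cast_le.2 hij)
  · rw [Set.indicator_of_notMem hx]
    exact truncation_nonneg j x

theorem tendsto_truncation (hD : Monotone D) {x : α} (hx : x ∈ ⋃ k, D k) :
    Tendsto (fun k => truncation D f k x) atTop (𝓝 |f x|) := by
  obtain ⟨k₀, hk₀⟩ := Set.mem_iUnion.1 hx
  obtain ⟨k₁, hk₁⟩ := exists_nat_ge |f x|
  refine tendsto_atTop_of_eventually_const (i₀ := max k₀ k₁) fun k hk => ?_
  rw [truncation, Set.indicator_of_mem (hD (le_of_max_le_left hk) hk₀)]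
  exact min_eq_left (hk₁.trans (Nat.cast_le.2 (le_of_max_le_right hk)))

theorem AEMeasurable.truncation [MeasurableSpace α] {μ : Measure α} (hf : AEMeasurable f μ)
    (hD : ∀ k, MeasurableSet (D k)) (k : ℕ) :
    AEMeasurable (_root_.truncation D f k) μ :=
  (hf.abs.min aemeasurable_const).indicator (hD k)

end Truncation

theorem div_abs_mul_self (x : ℝ) : x / |x| * x = |x| := by
  rcases eq_or_ne x 0 with rfl | hx
  · simp
  · rw [div_mul_eq_mul_div, ← abs_mul_abs_self, mul_self_div_self]

theorem tendsto_min_abs_natCast_mul_abs (a b : ℝ) :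
    Tendsto (fun k : ℕ => min |a| (k * |b|) * |b|) atTop (𝓝 |a * b|) := by
  refine tendsto_atTop_of_eventually_const (i₀ := ⌈|a| / |b|⌉₊) fun k hk => ?_
  rcases eq_or_ne b 0 with rfl | hb
  · simp
  · rw [abs_mul, min_eq_left ((div_le_iff₀ (abs_pos.2 hb)).1
      ((Nat.le_ceil _).trans (Nat.cast_le.2 hk)))]

namespace ENNReal

theorem exists_seq_lt_mul_of_iSup₂_eq_top {ι : Type*} {p : ι → Prop} {φ : ι → ℝ≥0∞}
    (h : ⨆ (i) (_ : p i), φ i = ∞) {c : ℕ → ℝ≥0∞} (hc : ∀ j, c j ≠ 0) :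
    ∃ u : ℕ → ι, ∀ j, p (u j) ∧ (j : ℝ≥0∞) < c j * φ (u j) := by
  have (j : ℕ) : ∃ i, p i ∧ (j : ℝ≥0∞) < c j * φ i := by
    have hj := h ▸ ENNReal.div_lt_top (natCast_ne_top j) (hc j)
    simp only [lt_iSup_iff, exists_prop] at hj
    obtain ⟨i, hi, hji⟩ := hj
    exact ⟨i, hi, mul_comm (c j) _ ▸ (ENNReal.div_lt_iff (Or.inl (hc j))
      (Or.inr (natCast_ne_top j))).1 hji⟩
  choose u hu using this
  exact ⟨u, hu⟩

theorem eq_top_of_forall_natCast_le {a : ℝ≥0∞} (h : ∀ j : ℕ, (j : ℝ≥0∞) ≤ a) : a = ∞ :=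
  eq_top_iff.2 (ENNReal.iSup_natCast ▸ iSup_le h)

theorem ofReal_abs_toReal_mul {a : ℝ≥0∞} (ha : a ≠ ∞) (r : ℝ) :
    ENNReal.ofReal |a.toReal * r| = a * ENNReal.ofReal |r| := by
  rw [abs_mul, abs_of_nonneg ENNReal.toReal_nonneg, ENNReal.ofReal_mul ENNReal.toReal_nonneg,
    ENNReal.ofReal_toReal ha]

end ENNReal

section KotheDual

variable {n : ℕ} {S : Set (Rn n → ℝ)}

theorem mem_kotheDual_iff (hS : ∀ f ∈ S, AEMeasurable f volume) {g : Rn n → ℝ} :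
    g ∈ kotheDual S ↔
      AEMeasurable g volume ∧ ∀ f ∈ S, ∫⁻ x, ENNReal.ofReal |f x * g x| < ∞ := by
  refine and_congr_right fun hg => forall₂_congr fun f hf => ?_
  simp only [Integrable, hasFiniteIntegral_iff_norm, Real.norm_eq_abs]
  exact and_iff_right ((hS f hf).mul hg).aestronglyMeasurable

theorem kotheDualNormE_mono {N : (Rn n → ℝ) → ℝ≥0∞} {f₁ f₂ : Rn n → ℝ}
    (h : ∀ x, |f₁ x| ≤ |f₂ x|) : kotheDualNormE S N f₁ ≤ kotheDualNormE S N f₂ :=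
  iSup₂_mono fun g _ => lintegral_mono fun x => ENNReal.ofReal_le_ofReal <| by
    rw [abs_mul, abs_mul]
    exact mul_le_mul_of_nonneg_left (h x) (abs_nonneg _)

theorem lintegral_abs_mul_eq_iSup_of_monotone {g : Rn n → ℝ} (hg : AEMeasurable g volume)
    {F : ℕ → Rn n → ℝ} {f : Rn n → ℝ} (hF : ∀ k, AEMeasurable (F k) volume)
    (h : ∀ᵐ x, (∀ k, 0 ≤ F k x) ∧ Monotone (fun k => F k x) ∧
      Tendsto (fun k => F k x) atTop (𝓝 (f x))) :
    ∫⁻ x, ENNReal.ofReal |g x * f x| = ⨆ k, ∫⁻ x, ENNReal.ofReal |g x * F k x| := by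
  refine lintegral_ofReal_eq_iSup_of_monotone (fun k => (hg.mul (hF k)).abs) ?_ ?_
  · filter_upwards [h] with x hx i j hij
    obtain ⟨hpos, hmono, -⟩ := hx
    dsimp only
    rw [abs_mul, abs_mul, abs_of_nonneg (hpos i), abs_of_nonneg (hpos j)]
    exact mul_le_mul_of_nonneg_left (hmono hij) (abs_nonneg _)
  · filter_upwards [h] with x hx using (hx.2.2.const_mul (g x)).abs

theorem kotheDualNormE_eq_iSup_of_monotone (hS : ∀ g ∈ S, AEMeasurable g volume)
    {N : (Rn n → ℝ) → ℝ≥0∞} {F : ℕ → Rn n → ℝ} {f : Rn n → ℝ}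
    (hF : ∀ k, AEMeasurable (F k) volume)
    (h : ∀ᵐ x, (∀ k, 0 ≤ F k x) ∧ Monotone (fun k => F k x) ∧
      Tendsto (fun k => F k x) atTop (𝓝 (f x))) :
    kotheDualNormE S N f = ⨆ k, kotheDualNormE S N (F k) := by
  simp only [kotheDualNormE]
  rw [iSup_comm]
  refine iSup_congr fun g => ?_
  rw [iSup_comm]
  exact iSup_congr fun hg => lintegral_abs_mul_eq_iSup_of_monotone (hS g hg.1) hF h

end KotheDual

namespace BanachInL0

variable {n : ℕ} {X : BanachInL0 n}

theorem sub_mem {f g : Rn n → ℝ} (hf : f ∈ X.carrier) (hg : g ∈ X.carrier) :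
    f - g ∈ X.carrier := by
  simpa [sub_eq_add_neg] using X.add_mem hf (X.smul_mem (-1) hg)

theorem norm_sub_comm (f g : Rn n → ℝ) : X.norm (f - g) = X.norm (g - f) := by
  rw [← neg_sub, ← neg_one_smul ℝ (g - f), X.norm_smul, abs_neg, abs_one, one_mul]

theorem sum_mem {ι : Type*} {s : Finset ι} {T : ι → Rn n → ℝ} (hT : ∀ j ∈ s, T j ∈ X.carrier) :
    ∑ j ∈ s, T j ∈ X.carrier :=
  Finset.sum_induction _ (· ∈ X.carrier) (fun _ _ => X.add_mem) X.zero_mem hT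

theorem norm_sum_le {ι : Type*} {s : Finset ι} {T : ι → Rn n → ℝ}
    (hT : ∀ j ∈ s, T j ∈ X.carrier) : X.norm (∑ j ∈ s, T j) ≤ ∑ j ∈ s, X.norm (T j) :=
  Finset.le_sum_of_subadditive_on_pred X.norm (· ∈ X.carrier) X.norm_zero.le
    (fun _ _ => X.norm_add_le) (fun _ _ => X.add_mem) T hT

theorem exists_tendsto_sum_of_norm_le_geometric {T : ℕ → Rn n → ℝ} (hT : ∀ j, T j ∈ X.carrier)
    (hnorm : ∀ j, X.norm (T j) ≤ 2⁻¹ ^ j) :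
    ∃ h ∈ X.carrier, Tendsto (fun J => X.norm (∑ j ∈ Finset.range J, T j - h)) atTop (𝓝 0) := by
  have hdist (J K : ℕ) (hJK : J ≤ K) :
      X.norm (∑ j ∈ Finset.range K, T j - ∑ j ∈ Finset.range J, T j) ≤ 2 * 2⁻¹ ^ J :=
    calc _ = X.norm (∑ j ∈ Finset.Ico J K, T j) := by rw [Finset.sum_Ico_eq_sub _ hJK]
      _ ≤ ∑ j ∈ Finset.Ico J K, (2⁻¹ : ℝ) ^ j :=
        (X.norm_sum_le fun j _ => hT j).trans (Finset.sum_le_sum fun j _ => hnorm j)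
      _ ≤ 2⁻¹ ^ J / (1 - 2⁻¹) := geom_sum_Ico_le_of_lt_one (by norm_num) (by norm_num)
      _ = 2 * 2⁻¹ ^ J := by ring
  refine X.complete _ (fun J => X.sum_mem fun j _ => hT j) fun ε hε => ?_
  obtain ⟨N, hN⟩ := exists_pow_lt_of_lt_one (half_pos hε) (by norm_num : (2⁻¹ : ℝ) < 1)
  have hsmall (J : ℕ) (hJ : N ≤ J) : 2 * (2⁻¹ : ℝ) ^ J < ε := by
    have := pow_le_pow_of_le_one (by norm_num : (0 : ℝ) ≤ 2⁻¹) (by norm_num) hJ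
    linarith
  refine ⟨N, fun k l hk hl => ?_⟩
  rcases le_total k l with hkl | hlk
  · rw [norm_sub_comm]
    exact (hdist k l hkl).trans_lt (hsmall k hk)
  · exact (hdist l k hlk).trans_lt (hsmall l hl)

theorem PropL.abs_mem (hL : X.PropL) {f : Rn n → ℝ} (hf : f ∈ X.carrier) :
    (fun x => |f x|) ∈ X.carrier :=
  (hL f _ hf (X.aemeasurable hf).abs (.of_forall fun _ => (abs_abs _).le)).1

theorem PropL.norm_abs (hL : X.PropL) {f : Rn n → ℝ} (hf : f ∈ X.carrier) :
    X.norm (fun x => |f x|) = X.norm f :=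
  le_antisymm (hL f _ hf (X.aemeasurable hf).abs (.of_forall fun _ => (abs_abs _).le)).2
    (hL _ f (hL.abs_mem hf) (X.aemeasurable hf) (.of_forall fun _ => (abs_abs _).ge)).2

theorem PropL.of_abs_mem (hL : X.PropL) {f : Rn n → ℝ} (hf : AEMeasurable f volume)
    (habs : (fun x => |f x|) ∈ X.carrier) :
    f ∈ X.carrier ∧ X.norm f ≤ X.norm (fun x => |f x|) :=
  hL _ f habs hf (.of_forall fun _ => (abs_abs _).ge)

theorem PropL.indicator_union_mem (hL : X.PropL) {s t : Set (Rn n)} (hs : MeasurableSet s)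
    (ht : MeasurableSet t) (hsX : s.indicator (fun _ => (1 : ℝ)) ∈ X.carrier)
    (htX : t.indicator (fun _ => (1 : ℝ)) ∈ X.carrier) :
    (s ∪ t).indicator (fun _ => (1 : ℝ)) ∈ X.carrier := by
  refine (hL _ _ (X.add_mem hsX htX) (aemeasurable_const.indicator (hs.union ht))
    (.of_forall fun x => ?_)).1
  by_cases h₁ : x ∈ s <;> by_cases h₂ : x ∈ t <;> simp [h₁, h₂, abs_of_nonneg]

theorem PropL.ae_le_of_tendsto (hL : X.PropL) {S : ℕ → Rn n → ℝ} {h : Rn n → ℝ}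
    (hS : ∀ k, S k ∈ X.carrier) (hh : h ∈ X.carrier) (hmono : ∀ x, Monotone fun k => S k x)
    (hlim : Tendsto (fun k => X.norm (S k - h)) atTop (𝓝 0)) (J : ℕ) :
    ∀ᵐ x, S J x ≤ h x := by
  set t : Rn n → ℝ := fun x => max (S J x - h x) 0
  have ht (k : ℕ) (hk : J ≤ k) : t ∈ X.carrier ∧ X.norm t ≤ X.norm (S k - h) := by
    refine hL _ t (X.sub_mem (hS k) hh)
      (((X.aemeasurable (hS J)).sub (X.aemeasurable hh)).max aemeasurable_const)
      (.of_forall fun x => ?_)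
    rw [abs_of_nonneg (le_max_right _ _)]
    exact max_le ((sub_le_sub_right (hmono x hk) _).trans (le_abs_self _)) (abs_nonneg _)
  have ht0 : X.norm t = 0 := le_antisymm
    (ge_of_tendsto hlim (eventually_atTop.2 ⟨J, fun k hk => (ht k hk).2⟩)) (X.norm_nonneg t)
  filter_upwards [X.norm_eq_zero (ht J le_rfl).1 ht0] with x hx
  simpa [t] using hx

theorem lintegral_abs_mul_le {h : Rn n → ℝ} (hh : h ∈ X.carrier) (g : Rn n → ℝ) :
    ∫⁻ x, ENNReal.ofReal |h x * g x| ≤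
      ENNReal.ofReal (X.norm h) * kotheDualNorm X.carrier X.norm g := by
  rcases (X.norm_nonneg h).eq_or_lt with h0 | hpos
  · calc ∫⁻ x, ENNReal.ofReal |h x * g x| = ∫⁻ _, 0 := lintegral_congr_ae <| by
          filter_upwards [X.norm_eq_zero hh h0.symm] with x hx
          simp [hx]
      _ ≤ _ := by rw [lintegral_zero]; exact zero_le
  · have hunit : X.norm ((X.norm h)⁻¹ • h) ≤ 1 := by
      rw [X.norm_smul, abs_of_pos (inv_pos.2 hpos), inv_mul_cancel₀ hpos.ne']
    calc ∫⁻ x, ENNReal.ofReal |h x * g x|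
        = ENNReal.ofReal (X.norm h) * ∫⁻ x, ENNReal.ofReal |((X.norm h)⁻¹ • h) x * g x| := by
          rw [lintegral_ofReal_abs_smul_mul, ← mul_assoc, ← ENNReal.ofReal_mul hpos.le,
            abs_of_pos (inv_pos.2 hpos), mul_inv_cancel₀ hpos.ne', ENNReal.ofReal_one, one_mul]
      _ ≤ _ := by
          gcongr
          exact le_iSup₂_of_le (f := fun f (_ : f ∈ X.carrier ∧ X.norm f ≤ 1) =>
            ∫⁻ x, ENNReal.ofReal |f x * g x|) _ ⟨X.smul_mem _ hh, hunit⟩ le_rfl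

theorem PropL.exists_ae_le_of_norm_le_geometric (hL : X.PropL) {T : ℕ → Rn n → ℝ}
    (hT : ∀ j, T j ∈ X.carrier) (hT0 : ∀ j x, 0 ≤ T j x) (hnorm : ∀ j, X.norm (T j) ≤ 2⁻¹ ^ j) :
    ∃ h ∈ X.carrier, ∀ j, ∀ᵐ x, T j x ≤ h x := by
  obtain ⟨h, hh, hlim⟩ := X.exists_tendsto_sum_of_norm_le_geometric hT hnorm
  have hmono (x : Rn n) : Monotone fun J => (∑ i ∈ Finset.range J, T i) x := fun _ _ hIJ => by
    simp only [Finset.sum_apply]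
    exact Finset.sum_le_sum_of_subset_of_nonneg (Finset.range_subset_range.2 hIJ)
      fun i _ _ => hT0 i x
  refine ⟨h, hh, fun j => ?_⟩
  filter_upwards [hL.ae_le_of_tendsto (fun J => X.sum_mem fun i _ => hT i) hh hmono hlim (j + 1)]
    with x hx
  refine le_trans ?_ hx
  simpa only [Finset.sum_apply] using
    Finset.single_le_sum (fun i _ => hT0 i x) (Finset.self_mem_range_succ j)

theorem mem_kotheDual_of_kotheDualNorm_lt_top {g : Rn n → ℝ} (hg : AEMeasurable g volume)
    (hfin : kotheDualNorm X.carrier X.norm g < ∞) : g ∈ kotheDual X.carrier :=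
  (mem_kotheDual_iff fun _ => X.aemeasurable).2 ⟨hg, fun _ hf =>
    (lintegral_abs_mul_le hf g).trans_lt (mul_lt_top ofReal_lt_top hfin)⟩

theorem subset_bidual : X.carrier ⊆ kotheDual (kotheDual X.carrier) := fun f hf =>
  ⟨X.aemeasurable hf, fun g hg => by simpa only [mul_comm] using hg.2 f hf⟩

theorem bidualNorm_le {f : Rn n → ℝ} (hf : f ∈ X.carrier) :
    kotheDualNormE (kotheDual X.carrier) (kotheDualNorm X.carrier X.norm) f ≤
      ENNReal.ofReal (X.norm f) :=
  iSup₂_le fun g hg => calc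
    ∫⁻ x, ENNReal.ofReal |g x * f x| = ∫⁻ x, ENNReal.ofReal |f x * g x| := by
      simp only [mul_comm]
    _ ≤ ENNReal.ofReal (X.norm f) * kotheDualNorm X.carrier X.norm g := lintegral_abs_mul_le hf g
    _ ≤ ENNReal.ofReal (X.norm f) := mul_le_of_le_one_right' hg.2

/-- If `‖g‖_{X'} = ∞`, pick unit vectors `uⱼ` with `∫ |uⱼ g| > 2ʲ j`; the series `∑ 2⁻ʲ |uⱼ|`
has a majorant `h ∈ X`, and `∫ |h g| = ∞`. -/
theorem PropL.kotheDualNorm_lt_top (hL : X.PropL) {g : Rn n → ℝ}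
    (hg : g ∈ kotheDual X.carrier) : kotheDualNorm X.carrier X.norm g < ∞ := by
  refine lt_top_iff_ne_top.2 fun htop => ?_
  obtain ⟨u, hu⟩ := exists_seq_lt_mul_of_iSup₂_eq_top htop
    (c := fun j => ENNReal.ofReal (2⁻¹ ^ j)) fun j => (ENNReal.ofReal_pos.2 (by positivity)).ne'
  set T : ℕ → Rn n → ℝ := fun j => (2⁻¹ : ℝ) ^ j • fun x => |u j x|
  have hT (j : ℕ) : T j ∈ X.carrier := X.smul_mem _ (hL.abs_mem (hu j).1.1)
  have hTnonneg (j : ℕ) (x : Rn n) : 0 ≤ T j x := by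
    simp only [T, Pi.smul_apply, smul_eq_mul]
    positivity
  have hTnorm (j : ℕ) : X.norm (T j) ≤ 2⁻¹ ^ j := by
    rw [X.norm_smul, hL.norm_abs (hu j).1.1, abs_of_pos (by positivity)]
    exact mul_le_of_le_one_right (by positivity) (hu j).1.2
  obtain ⟨h, hh, hTh⟩ := hL.exists_ae_le_of_norm_le_geometric hT hTnonneg hTnorm
  refine (((mem_kotheDual_iff fun _ => X.aemeasurable).1 hg).2 h hh).ne
    (eq_top_of_forall_natCast_le fun j => ?_)
  calc (j : ℝ≥0∞)
      ≤ ENNReal.ofReal (2⁻¹ ^ j) * ∫⁻ x, ENNReal.ofReal |u j x * g x| := (hu j).2.le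
    _ = ∫⁻ x, ENNReal.ofReal |T j x * g x| := by
      rw [lintegral_ofReal_abs_smul_mul, abs_of_pos (by positivity)]
      simp only [abs_mul, abs_abs]
    _ ≤ ∫⁻ x, ENNReal.ofReal |h x * g x| := lintegral_mono_ae <| by
      filter_upwards [hTh j] with x hx
      rw [abs_mul, abs_mul, abs_of_nonneg (hTnonneg j x)]
      gcongr
      exact hx.trans (le_abs_self _)

theorem PropSa.ae_lt_top (hSa : X.PropSa) {G : Rn n → ℝ≥0∞} (hG : AEMeasurable G volume)
    (hfin : ∀ h ∈ X.carrier, ∫⁻ x, ENNReal.ofReal |h x| * G x < ∞) : ∀ᵐ x, G x < ∞ := by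
  set E := {x | hG.mk G x = ∞}
  suffices volume E = 0 by
    filter_upwards [hG.ae_eq_mk, measure_eq_zero_iff_ae_notMem.1 this] with x hx hxE
    exact lt_top_iff_ne_top.2 (hx ▸ hxE)
  by_contra hE
  obtain ⟨F, hF, hFE, hFpos, hFX⟩ :=
    hSa E (hG.measurable_mk (measurableSet_singleton ∞)) (pos_iff_ne_zero.2 hE)
  have hGF : ∀ᵐ x ∂volume.restrict F, G x = ∞ := by
    rw [ae_restrict_iff' hF]
    filter_upwards [hG.ae_eq_mk] with x hx hxF
    exact hx.trans (hFE hxF)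
  refine (hfin _ hFX).ne ?_
  calc ∫⁻ x, ENNReal.ofReal |F.indicator (fun _ => (1 : ℝ)) x| * G x
      = ∫⁻ x in F, G x := by
        rw [← lintegral_indicator hF]
        congr 1 with x
        by_cases hx : x ∈ F <;> simp [hx]
    _ = ∞ := by
        rw [lintegral_congr_ae hGF, setLIntegral_const, top_mul hFpos.ne']

theorem PropSa.tsum_mem_kotheDual (hSa : X.PropSa) {g : ℕ → Rn n → ℝ}
    (hg : ∀ j, g j ∈ kotheDual X.carrier) (hg1 : ∀ j, kotheDualNorm X.carrier X.norm (g j) ≤ 1) :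
    (∀ᵐ x, ∑' j, 2⁻¹ ^ j * ENNReal.ofReal |g j x| < ∞) ∧
      (fun x => (∑' j, 2⁻¹ ^ j * ENNReal.ofReal |g j x|).toReal) ∈ kotheDual X.carrier := by
  set G : Rn n → ℝ≥0∞ := fun x => ∑' j, 2⁻¹ ^ j * ENNReal.ofReal |g j x|
  have hGm : AEMeasurable G volume :=
    AEMeasurable.tsum fun j => (hg j).1.abs.ennreal_ofReal.const_mul _
  have hG (h : Rn n → ℝ) (hh : h ∈ X.carrier) : ∫⁻ x, ENNReal.ofReal |h x| * G x < ∞ := calc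
    ∫⁻ x, ENNReal.ofReal |h x| * G x
        = ∫⁻ x, ∑' j, 2⁻¹ ^ j * ENNReal.ofReal |h x * g j x| := lintegral_congr fun x => by
      rw [← ENNReal.tsum_mul_left]
      congr 1 with j
      rw [abs_mul, ENNReal.ofReal_mul (abs_nonneg _)]
      ring
    _ = ∑' j, 2⁻¹ ^ j * ∫⁻ x, ENNReal.ofReal |h x * g j x| := by
      refine (lintegral_tsum fun j => ?_).trans
        (tsum_congr fun j => lintegral_const_mul' _ _ (by simp))
      exact ((X.aemeasurable hh).mul (hg j).1).abs.ennreal_ofReal.const_mul _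
    _ ≤ ∑' j, 2⁻¹ ^ j * ENNReal.ofReal (X.norm h) := ENNReal.tsum_le_tsum fun j => by
      gcongr
      exact (lintegral_abs_mul_le hh (g j)).trans (mul_le_of_le_one_right' (hg1 j))
    _ = 2 * ENNReal.ofReal (X.norm h) := by
      rw [ENNReal.tsum_mul_right, ENNReal.tsum_geometric, ENNReal.one_sub_inv_two, inv_inv]
    _ < ∞ := mul_lt_top (by simp) ofReal_lt_top
  have hGfin : ∀ᵐ x, G x < ∞ := hSa.ae_lt_top hGm hG
  refine ⟨hGfin, (mem_kotheDual_iff fun _ => X.aemeasurable).2 ⟨hGm.ennreal_toReal, fun h hh => ?_⟩⟩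
  refine lt_of_eq_of_lt (lintegral_congr_ae ?_) (hG h hh)
  filter_upwards [hGfin] with x hx
  rw [mul_comm, ofReal_abs_toReal_mul hx.ne, mul_comm]

/-- If `‖f‖_{X''} = ∞`, pick unit vectors `gⱼ` of `X'` with `∫ |gⱼ f| > 2ʲ j`; then
`∑ 2⁻ʲ |gⱼ| ∈ X'` and `∫ (∑ 2⁻ʲ |gⱼ|) |f| = ∞`. -/
theorem PropSa.bidualNorm_lt_top (hSa : X.PropSa) {f : Rn n → ℝ}
    (hf : f ∈ kotheDual (kotheDual X.carrier)) :
    kotheDualNormE (kotheDual X.carrier) (kotheDualNorm X.carrier X.norm) f < ∞ := by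
  refine lt_top_iff_ne_top.2 fun htop => ?_
  obtain ⟨g, hg⟩ := exists_seq_lt_mul_of_iSup₂_eq_top htop (c := fun j => 2⁻¹ ^ j)
    fun j => by simp
  obtain ⟨hGfin, hGX'⟩ := hSa.tsum_mem_kotheDual (fun j => (hg j).1.1) fun j => (hg j).1.2
  refine (((mem_kotheDual_iff fun _ hg => hg.1).1 hf).2 _ hGX').ne
    (eq_top_of_forall_natCast_le fun j => ?_)
  calc (j : ℝ≥0∞)
      ≤ 2⁻¹ ^ j * ∫⁻ x, ENNReal.ofReal |g j x * f x| := (hg j).2.le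
    _ = ∫⁻ x, 2⁻¹ ^ j * ENNReal.ofReal |g j x| * ENNReal.ofReal |f x| := by
      rw [← lintegral_const_mul' _ _ (by simp)]
      congr 1 with x
      rw [abs_mul, ENNReal.ofReal_mul (abs_nonneg _), mul_assoc]
    _ ≤ ∫⁻ x, ENNReal.ofReal |(∑' j, 2⁻¹ ^ j * ENNReal.ofReal |g j x|).toReal * f x| :=
      lintegral_mono_ae <| by
        filter_upwards [hGfin] with x hx
        rw [ofReal_abs_toReal_mul hx.ne]
        gcongr
        exact ENNReal.le_tsum (f := fun j => 2⁻¹ ^ j * ENNReal.ofReal |g j x|) j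

theorem PropSa.exists_monotone_indicator_mem (hL : X.PropL) (hSa : X.PropSa) :
    ∃ D : ℕ → Set (Rn n), (∀ k, MeasurableSet (D k)) ∧ Monotone D ∧
      (∀ k, (D k).indicator (fun _ => (1 : ℝ)) ∈ X.carrier) ∧ ∀ᵐ x, x ∈ ⋃ k, D k := by
  obtain ⟨D, hDmono, hD, hcover⟩ := exists_monotone_ae_mem_iUnion (μ := volume)
    (P := fun s => MeasurableSet s ∧ s.indicator (fun _ => (1 : ℝ)) ∈ X.carrier)
    (fun _ hs => hs.1) ⟨.empty, by rw [Set.indicator_empty]; exact X.zero_mem⟩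
    (fun _ _ hs ht => ⟨hs.1.union ht.1, hL.indicator_union_mem hs.1 ht.1 hs.2 ht.2⟩)
    fun E hE hpos => by
      obtain ⟨F, hF, hFE, hFpos, hFX⟩ := hSa E hE hpos
      exact ⟨F, hFE, ⟨hF, hFX⟩, hFpos⟩
  exact ⟨D, fun k => (hD k).1, hDmono, fun k => (hD k).2, hcover⟩

theorem PropF.abs_mem_of_truncation (hF : X.PropF) {D : ℕ → Set (Rn n)} (hD : Monotone D)
    (hcover : ∀ᵐ x, x ∈ ⋃ k, D k) {f : Rn n → ℝ} (hf : AEMeasurable f volume)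
    (htr : ∀ k, truncation D f k ∈ X.carrier) {C : ℝ}
    (hC : ∀ k, X.norm (truncation D f k) ≤ C) :
    (fun x => |f x|) ∈ X.carrier ∧ X.norm (fun x => |f x|) = ⨆ k, X.norm (truncation D f k) :=
  hF _ _ htr hf.abs (hcover.mono fun x hx =>
      ⟨fun k => truncation_nonneg k x, monotone_truncation hD x, tendsto_truncation hD hx⟩)
    ⟨C, by rintro _ ⟨k, rfl⟩; exact hC k⟩

/-- Apply (F) to the increasing sequence `infᵢ≥ⱼ |Hᵢ|`, whose limit is `liminf |Hᵢ| = |h|`. -/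
theorem PropF.mem_of_ae_tendsto (hF : X.PropF) (hL : X.PropL) {C : ℝ} {H : ℕ → Rn n → ℝ}
    {h : Rn n → ℝ} (hh : AEMeasurable h volume) (hH : ∀ j, H j ∈ X.carrier)
    (hC : ∀ j, X.norm (H j) ≤ C) (hlim : ∀ᵐ x, Tendsto (fun j => H j x) atTop (𝓝 (h x))) :
    h ∈ X.carrier ∧ X.norm h ≤ C := by
  set I : ℕ → Rn n → ℝ≥0∞ := fun j x => ⨅ i, ENNReal.ofReal |H (i + j) x|
  set G : ℕ → Rn n → ℝ := fun j x => (I j x).toReal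
  have hI_le (j : ℕ) (x : Rn n) : I j x ≤ ENNReal.ofReal |H j x| := by
    simpa using iInf_le (fun i => ENNReal.ofReal |H (i + j) x|) 0
  have hI_ne (j : ℕ) (x : Rn n) : I j x ≠ ∞ := ne_top_of_le_ne_top ofReal_ne_top (hI_le j x)
  have hI_mono (x : Rn n) : Monotone fun j => I j x := fun j k hjk => le_iInf fun i =>
    (iInf_le _ (i + (k - j))).trans_eq (by rw [show i + (k - j) + j = i + k by omega])
  have hG (j : ℕ) : G j ∈ X.carrier ∧ X.norm (G j) ≤ X.norm (H j) :=
    hL _ _ (hH j)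
      (AEMeasurable.iInf fun i => (X.aemeasurable (hH _)).abs.ennreal_ofReal).ennreal_toReal
      (.of_forall fun x => by
        rw [abs_of_nonneg toReal_nonneg]
        simpa using toReal_mono ofReal_ne_top (hI_le j x))
  have hG_lim : ∀ᵐ x, Tendsto (fun j => G j x) atTop (𝓝 |h x|) := by
    filter_upwards [hlim] with x hx
    have hsup : ⨆ j, I j x = ENNReal.ofReal |h x| :=
      (liminf_eq_iSup_iInf_of_nat' (u := fun i => ENNReal.ofReal |H i x|)).symm.trans
        ((ENNReal.continuous_ofReal.tendsto _).comp hx.abs).liminf_eq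
    have := (ENNReal.tendsto_toReal ofReal_ne_top).comp (hsup ▸ tendsto_atTop_iSup (hI_mono x))
    rwa [ENNReal.toReal_ofReal (abs_nonneg _)] at this
  obtain ⟨habs, hnorm⟩ := hF G _ (fun j => (hG j).1) hh.abs
    (hG_lim.mono fun x hx => ⟨fun _ => toReal_nonneg,
      fun _ k hjk => toReal_mono (hI_ne k x) (hI_mono x hjk), hx⟩)
    ⟨C, by rintro _ ⟨j, rfl⟩; exact (hG j).2.trans (hC j)⟩
  obtain ⟨hmem, hle⟩ := hL.of_abs_mem hh habs
  exact ⟨hmem, hle.trans (hnorm ▸ ciSup_le fun j => (hG j).2.trans (hC j))⟩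

def unitBallL2 (X : BanachInL0 n) : Set (Lp ℝ 2 (volume : Measure (Rn n))) :=
  {u | ∃ h ∈ X.carrier, X.norm h ≤ 1 ∧ (u : Rn n → ℝ) =ᵐ[volume] h}

theorem convex_unitBallL2 : Convex ℝ X.unitBallL2 := by
  rintro u ⟨h₁, hm₁, hn₁, he₁⟩ v ⟨h₂, hm₂, hn₂, he₂⟩ a b ha hb hab
  refine ⟨a • h₁ + b • h₂, X.add_mem (X.smul_mem _ hm₁) (X.smul_mem _ hm₂), ?_, ?_⟩
  · calc X.norm (a • h₁ + b • h₂) ≤ X.norm (a • h₁) + X.norm (b • h₂) :=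
          X.norm_add_le (X.smul_mem _ hm₁) (X.smul_mem _ hm₂)
      _ = a * X.norm h₁ + b * X.norm h₂ := by
          rw [X.norm_smul, X.norm_smul, abs_of_nonneg ha, abs_of_nonneg hb]
      _ ≤ a * 1 + b * 1 := by gcongr
      _ = 1 := by rw [mul_one, mul_one, hab]
  · filter_upwards [Lp.coeFn_add (a • u) (b • v), Lp.coeFn_smul a u, Lp.coeFn_smul b v, he₁, he₂]
      with x h₁ h₂ h₃ h₄ h₅
    rw [h₁, Pi.add_apply, h₂, h₃]
    simp only [Pi.add_apply, Pi.smul_apply, smul_eq_mul, h₄, h₅]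

theorem PropF.isClosed_unitBallL2 (hF : X.PropF) (hL : X.PropL) : IsClosed X.unitBallL2 := by
  refine isClosed_of_closure_subset fun u hu => ?_
  obtain ⟨v, hv, hlim⟩ := mem_closure_iff_seq_limit.1 hu
  choose h hhX hh1 hvh using hv
  obtain ⟨ns, -, hae⟩ := (tendstoInMeasure_of_tendsto_Lp hlim).exists_seq_tendsto_ae
  have hu := hF.mem_of_ae_tendsto hL (Lp.aestronglyMeasurable u).aemeasurable
    (fun i => hhX (ns i)) (fun i => hh1 (ns i)) (by
      filter_upwards [hae, ae_all_iff.2 fun i => hvh (ns i)] with x hx hxe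
      exact hx.congr hxe)
  exact ⟨u, hu.1, hu.2, .rfl⟩

theorem PropF.exists_separating (hF : X.PropF) (hL : X.PropL) {φ : Rn n → ℝ}
    (hφ2 : MemLp φ 2 volume) (hφ : 1 < X.norm φ) :
    ∃ (G : Rn n → ℝ) (c : ℝ), MemLp G 2 volume ∧
      (∀ h ∈ X.carrier, X.norm h ≤ 1 → MemLp h 2 volume → ∫ x, h x * G x < c) ∧
      c < ∫ x, φ x * G x := by
  have hφ_notMem : hφ2.toLp φ ∉ X.unitBallL2 := by
    rintro ⟨h, -, hh1, he⟩
    exact hφ.not_ge (X.norm_congr (hφ2.coeFn_toLp.symm.trans he) ▸ hh1)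
  obtain ⟨Φ, c, hΦ, hc⟩ := geometric_hahn_banach_closed_point X.convex_unitBallL2
    (hF.isClosed_unitBallL2 hL) hφ_notMem
  obtain ⟨G, hG⟩ : ∃ G : Lp ℝ 2 (volume : Measure (Rn n)), ∀ u, Φ u = inner ℝ G u :=
    ⟨_, fun u => InnerProductSpace.toDual_symm_apply.symm⟩
  have hΦG (f : Rn n → ℝ) (hf : MemLp f 2 volume) : Φ (hf.toLp f) = ∫ x, f x * G x := by
    rw [hG, L2.inner_def]
    refine integral_congr_ae ?_
    filter_upwards [hf.coeFn_toLp] with x hx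
    simp [hx]
  refine ⟨G, c, Lp.memLp G, fun h hh hh1 hh2 => ?_, hΦG φ hφ2 ▸ hc⟩
  exact hΦG h hh2 ▸ hΦ _ ⟨h, hh, hh1, hh2.coeFn_toLp⟩

/-- Test against `sgn G · min (|h|, k |G|)` (written with `G / |G|`), which lies in `X ∩ L²` and
whose product with `G` increases to `|h G|`. -/
theorem PropL.lintegral_abs_mul_le_of_integral_mul_lt (hL : X.PropL) {G : Rn n → ℝ}
    (hG : MemLp G 2 volume) {c : ℝ}
    (hc : ∀ h ∈ X.carrier, X.norm h ≤ 1 → MemLp h 2 volume → ∫ x, h x * G x < c)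
    {h : Rn n → ℝ} (hh : h ∈ X.carrier) (hh1 : X.norm h ≤ 1) :
    ∫⁻ x, ENNReal.ofReal |h x * G x| ≤ ENNReal.ofReal c := by
  set t : ℕ → Rn n → ℝ := fun k x => G x / |G x| * min |h x| (k * |G x|)
  have hGm := hG.aestronglyMeasurable.aemeasurable
  have hhm := X.aemeasurable hh
  have ht_le (k : ℕ) (x : Rn n) : |t k x| ≤ min |h x| (k * |G x|) := by
    have h0 : 0 ≤ min |h x| (k * |G x|) := by positivity
    rw [abs_mul, abs_of_nonneg h0]
    refine mul_le_of_le_one_left h0 ?_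
    rw [abs_div, abs_abs]
    exact div_self_le_one _
  have htG (k : ℕ) (x : Rn n) : t k x * G x = min |h x| (k * |G x|) * |G x| := by
    simp only [t]
    rw [mul_comm (G x / |G x|), mul_assoc, div_abs_mul_self]
  have ht (k : ℕ) : t k ∈ X.carrier ∧ X.norm (t k) ≤ X.norm h :=
    hL h (t k) hh (by fun_prop) (.of_forall fun x => (ht_le k x).trans (min_le_left _ _))
  have ht2 (k : ℕ) : MemLp (t k) 2 volume := (hG.const_mul (k : ℝ)).of_le (by fun_prop)
    (.of_forall fun x => by
      rw [Real.norm_eq_abs, Real.norm_eq_abs]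
      calc |t k x| ≤ min |h x| (k * |G x|) := ht_le k x
        _ ≤ k * |G x| := min_le_right _ _
        _ = |k * G x| := by rw [abs_mul, Nat.abs_cast])
  rw [lintegral_ofReal_eq_iSup_of_monotone (fun k => by fun_prop)
    (.of_forall fun x i j hij => by dsimp only; gcongr)
    (.of_forall fun x => tendsto_min_abs_natCast_mul_abs (h x) (G x))]
  refine iSup_le fun k => ?_
  simp_rw [← htG]
  refine (ofReal_integral_eq_lintegral_ofReal ((ht2 k).integrable_mul hG)
    (.of_forall fun x => ?_)).symm.trans_le ?_
  · show 0 ≤ t k x * G x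
    rw [htG]
    positivity
  · exact ENNReal.ofReal_le_ofReal (hc _ (ht k).1 ((ht k).2.trans hh1) (ht2 k)).le

theorem PropF.exists_kotheDual_one_lt_lintegral (hF : X.PropF) (hL : X.PropL) {φ : Rn n → ℝ}
    (hφ2 : MemLp φ 2 volume) (hφ : 1 < X.norm φ) :
    ∃ g ∈ kotheDual X.carrier, kotheDualNorm X.carrier X.norm g ≤ 1 ∧
      1 < ∫⁻ x, ENNReal.ofReal |φ x * g x| := by
  obtain ⟨G, c, hG, hc, hcφ⟩ := hF.exists_separating hL hφ2 hφ
  have hc0 : 0 < c := by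
    simpa using hc 0 X.zero_mem (X.norm_zero.trans_le zero_le_one) MemLp.zero
  have hcc : ENNReal.ofReal |c⁻¹| * ENNReal.ofReal c = 1 := by
    rw [abs_of_pos (inv_pos.2 hc0), ← ENNReal.ofReal_mul (inv_pos.2 hc0).le,
      inv_mul_cancel₀ hc0.ne', ENNReal.ofReal_one]
  have hnorm : kotheDualNorm X.carrier X.norm (c⁻¹ • G) ≤ 1 := iSup₂_le fun h hh => by
    rw [lintegral_ofReal_abs_mul_smul, ← hcc]
    gcongr
    exact hL.lintegral_abs_mul_le_of_integral_mul_lt hG hc hh.1 hh.2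
  refine ⟨c⁻¹ • G, mem_kotheDual_of_kotheDualNorm_lt_top
    (hG.aestronglyMeasurable.aemeasurable.const_smul _) (hnorm.trans_lt one_lt_top), hnorm, ?_⟩
  rw [lintegral_ofReal_abs_mul_smul, ← hcc]
  refine ENNReal.mul_lt_mul_right (by simpa using hc0.ne') ofReal_ne_top ?_
  calc ENNReal.ofReal c < ENNReal.ofReal (∫ x, φ x * G x) :=
        ENNReal.ofReal_lt_ofReal_iff'.2 ⟨hcφ, hc0.trans hcφ⟩
    _ ≤ ‖∫ x, φ x * G x‖ₑ := by
      rw [Real.enorm_eq_ofReal_abs]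
      exact ENNReal.ofReal_le_ofReal (le_abs_self _)
    _ ≤ ∫⁻ x, ‖φ x * G x‖ₑ := enorm_integral_le_lintegral_enorm _
    _ = ∫⁻ x, ENNReal.ofReal |φ x * G x| := by simp_rw [Real.enorm_eq_ofReal_abs]

theorem PropF.exists_memLp_lt_norm (hF : X.PropF) (hL : X.PropL) {f : Rn n → ℝ}
    (hf : f ∈ X.carrier) {a : ℝ} (ha : a < X.norm f) :
    ∃ φ ∈ X.carrier, MemLp φ 2 volume ∧ (∀ x, |φ x| ≤ |f x|) ∧ a < X.norm φ := by
  set D : ℕ → Set (Rn n) := fun k => Metric.ball 0 k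
  have hD : Monotone D := fun i j hij => Metric.ball_subset_ball (Nat.cast_le.2 hij)
  have hcover (x : Rn n) : x ∈ ⋃ k, D k := by
    obtain ⟨k, hk⟩ := exists_nat_gt ‖x‖
    exact Set.mem_iUnion.2 ⟨k, by simpa [D] using hk⟩
  have htr_le (k : ℕ) (x : Rn n) : |truncation D f k x| ≤ |f x| := by
    rw [abs_truncation]
    exact truncation_le_abs k x
  have htr (k : ℕ) := hL f (truncation D f k) hf
    ((X.aemeasurable hf).truncation (fun _ => measurableSet_ball) k) (.of_forall (htr_le k))
  obtain ⟨-, hnorm⟩ := hF.abs_mem_of_truncation hD (.of_forall hcover) (X.aemeasurable hf)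
    (fun k => (htr k).1) fun k => (htr k).2
  obtain ⟨k, hk⟩ := exists_lt_of_lt_ciSup (hnorm ▸ hL.norm_abs hf ▸ ha)
  refine ⟨truncation D f k, (htr k).1, ?_, htr_le k, hk⟩
  refine (memLp_indicator_const 2 (measurableSet_ball (x := 0) (ε := k)) (k : ℝ)
    (.inr measure_ball_lt_top.ne)).of_le
    ((X.aemeasurable hf).truncation (fun _ => measurableSet_ball) k).aestronglyMeasurable
    (.of_forall fun x => ?_)
  rw [Real.norm_eq_abs, Real.norm_eq_abs, abs_truncation]
  exact (truncation_le_indicator k x).trans (le_abs_self _)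

theorem PropF.ofReal_norm_le_bidualNorm (hF : X.PropF) (hL : X.PropL) {f : Rn n → ℝ}
    (hf : f ∈ X.carrier) :
    ENNReal.ofReal (X.norm f) ≤
      kotheDualNormE (kotheDual X.carrier) (kotheDualNorm X.carrier X.norm) f := by
  have key (a : ℝ) (ha : 0 < a) (haf : a < X.norm f) :
      ENNReal.ofReal a ≤
        kotheDualNormE (kotheDual X.carrier) (kotheDualNorm X.carrier X.norm) f := by
    have h1 : 1 < X.norm (a⁻¹ • f) := by
      rw [X.norm_smul, abs_of_pos (inv_pos.2 ha)]
      exact (one_lt_inv_mul₀ ha).2 haf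
    obtain ⟨φ, hφX, hφ2, hφf, hφ1⟩ := hF.exists_memLp_lt_norm hL (X.smul_mem _ hf) h1
    obtain ⟨g, hg, hg1, hφg⟩ := hF.exists_kotheDual_one_lt_lintegral hL hφ2 hφ1
    calc ENNReal.ofReal a = ENNReal.ofReal a * 1 := (mul_one _).symm
      _ ≤ ENNReal.ofReal a * ∫⁻ x, ENNReal.ofReal |(a⁻¹ • f) x * g x| := by
        gcongr
        refine hφg.le.trans (lintegral_mono fun x => ENNReal.ofReal_le_ofReal ?_)
        rw [abs_mul, abs_mul]
        exact mul_le_mul_of_nonneg_right (hφf x) (abs_nonneg _)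
      _ = ∫⁻ x, ENNReal.ofReal |g x * f x| := by
        rw [lintegral_ofReal_abs_smul_mul, ← mul_assoc, ← ENNReal.ofReal_mul ha.le,
          abs_of_pos (inv_pos.2 ha), mul_inv_cancel₀ ha.ne', ENNReal.ofReal_one, one_mul]
        simp only [mul_comm]
      _ ≤ _ := le_iSup₂_of_le (f := fun g (_ : g ∈ kotheDual X.carrier ∧
          kotheDualNorm X.carrier X.norm g ≤ 1) => ∫⁻ x, ENNReal.ofReal |g x * f x|)
          g ⟨hg, hg1⟩ le_rfl
  refine le_of_forall_lt_imp_le_of_dense fun b hb => ?_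
  rw [← ENNReal.ofReal_toReal hb.ne_top]
  rcases ENNReal.toReal_nonneg.eq_or_lt with h0 | hpos
  · rw [← h0, ENNReal.ofReal_zero]
    exact zero_le
  · exact key _ hpos ((ENNReal.lt_ofReal_iff_toReal_lt hb.ne_top).1 hb)

theorem PropF.bidual_subset (hF : X.PropF) (hL : X.PropL) (hSa : X.PropSa) :
    kotheDual (kotheDual X.carrier) ⊆ X.carrier := by
  intro f hf
  obtain ⟨D, hDm, hD, hDX, hcover⟩ := hSa.exists_monotone_indicator_mem hL
  have htr (k : ℕ) : truncation D f k ∈ X.carrier := by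
    refine (hL _ _ (X.smul_mem (k : ℝ) (hDX k)) (hf.1.truncation hDm k)
      (.of_forall fun x => ?_)).1
    rw [abs_truncation]
    refine (truncation_le_indicator k x).trans_eq ?_
    by_cases hx : x ∈ D k
    · simp [hx]
    · simp [hx]
  have hbound (k : ℕ) : X.norm (truncation D f k) ≤
      (kotheDualNormE (kotheDual X.carrier) (kotheDualNorm X.carrier X.norm) f).toReal :=
    (ENNReal.ofReal_le_iff_le_toReal (hSa.bidualNorm_lt_top hf).ne).1 <|
      (hF.ofReal_norm_le_bidualNorm hL (htr k)).trans (kotheDualNormE_mono fun x => by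
        rw [abs_truncation]
        exact truncation_le_abs k x)
  exact (hL.of_abs_mem hf.1 (hF.abs_mem_of_truncation hD hcover hf.1 htr hbound).1).1

theorem PropL.propF_of_bidual_eq (hL : X.PropL)
    (hset : kotheDual (kotheDual X.carrier) = X.carrier)
    (hnorm : ∀ f ∈ X.carrier, kotheDualNormE (kotheDual X.carrier)
      (kotheDualNorm X.carrier X.norm) f = ENNReal.ofReal (X.norm f)) : X.PropF := by
  intro F f hF hf hmono hbdd
  have hFm (k : ℕ) := X.aemeasurable (hF k)
  have hC (k : ℕ) : X.norm (F k) ≤ ⨆ j, X.norm (F j) := le_ciSup hbdd k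
  have hfX : f ∈ X.carrier := by
    refine hset ▸ (mem_kotheDual_iff fun _ hg => hg.1).2 ⟨hf, fun g hg => ?_⟩
    rw [lintegral_abs_mul_eq_iSup_of_monotone hg.1 hFm hmono]
    refine (iSup_le (a := ENNReal.ofReal (⨆ j, X.norm (F j)) * kotheDualNorm X.carrier X.norm g)
      fun k => ?_).trans_lt (mul_lt_top ofReal_lt_top (hL.kotheDualNorm_lt_top hg))
    calc ∫⁻ x, ENNReal.ofReal |g x * F k x| = ∫⁻ x, ENNReal.ofReal |F k x * g x| := by
          simp only [mul_comm]
      _ ≤ ENNReal.ofReal (X.norm (F k)) * kotheDualNorm X.carrier X.norm g :=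
          lintegral_abs_mul_le (hF k) g
      _ ≤ ENNReal.ofReal (⨆ j, X.norm (F j)) * kotheDualNorm X.carrier X.norm g := by
          gcongr
          exact hC k
  refine ⟨hfX, (ENNReal.ofReal_eq_ofReal_iff (X.norm_nonneg f)
    ((X.norm_nonneg _).trans (hC 0))).1 ?_⟩
  rw [← hnorm f hfX, kotheDualNormE_eq_iSup_of_monotone (fun _ hg => hg.1) hFm hmono,
    Monotone.map_ciSup_of_continuousAt ENNReal.continuous_ofReal.continuousAt
      ENNReal.ofReal_mono hbdd]
  exact iSup_congr fun k => hnorm _ (hF k)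

end BanachInL0

/-- **Lorentz–Luxemburg theorem.** For a Banach space `X ⊆ L⁰(ℝⁿ)` with the
lattice and saturation properties, `X` has the Fatou property if and only if the
second Köthe dual `X''` coincides with `X` with equality of norms. -/
theorem lorentz_luxemburg {n : ℕ} (X : BanachInL0 n)
    (hL : X.PropL) (hSa : X.PropSa) :
    X.PropF ↔
      (kotheDual (kotheDual X.carrier) = X.carrier ∧
        ∀ f ∈ X.carrier,
          kotheDualNormE (kotheDual X.carrier) (kotheDualNorm X.carrier X.norm) f
            = ENNReal.ofReal (X.norm f)) :=
  ⟨fun hF => ⟨(hF.bidual_subset hL hSa).antisymm X.subset_bidual, fun _ hf =>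
      (X.bidualNorm_le hf).antisymm (hF.ofReal_norm_le_bidualNorm hL hf)⟩,
    fun h => hL.propF_of_bidual_eq h.1 h.2⟩

end
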